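/- Let 𝓗 be a Hilbert space, G = 𝓗 ⋊ O(𝓗) the isometry group of 𝓗 acting canonically on 𝓗, and suppose the subgroup O(𝓗) ≤ G is coarsely bounded. Then the canonical action of G on 𝓗 is coarsely proper: for every sequence g_n = (v_n, u_n) ∈ G leaving every coarsely bounded subset of G, ‖g_n · 0‖ = ‖v_n‖ → ∞. -/

import Mathlib

open Filter

variable (𝓗 : Type*) [NormedAddCommGroup 𝓗] [InnerProductSpace ℝ 𝓗]

/-- The isometry group `𝓗 ⋊ O(𝓗)` of a real Hilbert space `𝓗`, as pairs
`(v, u)` of a translation part `v ∈ 𝓗` and an orthogonal part `u ∈ O(𝓗)`,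
acting by `(v, u) · x = u x + v`. -/
abbrev IsomGrp := 𝓗 × (𝓗 ≃ₗᵢ[ℝ] 𝓗)

/-- Norm topology on the orthogonal group. -/
noncomputable instance : TopologicalSpace (𝓗 ≃ₗᵢ[ℝ] 𝓗) :=
  TopologicalSpace.induced
    (fun u => (u.toLinearIsometry.toContinuousLinearMap : 𝓗 →L[ℝ] 𝓗)) inferInstance

/-- Semidirect product group structure on `𝓗 ⋊ O(𝓗)`. -/
instance : Group (IsomGrp 𝓗) where
  mul a b := (a.1 + a.2 b.1, a.2 * b.2)
  one := (0, 1)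
  inv a := (-(a.2⁻¹ a.1), a.2⁻¹)
  mul_assoc a b c := by
    refine Prod.ext ?_ (mul_assoc _ _ _)
    show a.1 + a.2 b.1 + (a.2 * b.2) c.1 = a.1 + a.2 (b.1 + b.2 c.1)
    simp [LinearIsometryEquiv.coe_mul, map_add, add_assoc]
  one_mul a := by
    refine Prod.ext ?_ (one_mul _)
    show (0 : 𝓗) + (1 : 𝓗 ≃ₗᵢ[ℝ] 𝓗) a.1 = a.1
    simp
  mul_one a := by
    refine Prod.ext ?_ (mul_one _)
    show a.1 + a.2 0 = a.1
    simp
  inv_mul_cancel a := by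
    refine Prod.ext ?_ (inv_mul_cancel _)
    show -(a.2⁻¹ a.1) + a.2⁻¹ a.1 = 0
    simp

/-- A subset `B` of a topological group is coarsely bounded if it has finite diameter with
respect to every continuous left-invariant pseudometric. -/
def CoarselyBounded {G : Type*} [Group G] [TopologicalSpace G] (B : Set G) : Prop :=
  ∀ d : G → G → ℝ,
    Continuous (fun p : G × G => d p.1 p.2) →
    (∀ k g h : G, d (k * g) (k * h) = d g h) →
    (∀ g : G, d g g = 0) →
    (∀ g h : G, d g h = d h g) →
    (∀ g h k : G, d g k ≤ d g h + d h k) →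
    ∃ C : ℝ, ∀ g ∈ B, ∀ h ∈ B, d g h ≤ C

open Metric Bornology
open scoped Pointwise Topology

/-!
Coarse boundedness is tested on the lengths `d 1 g` of a continuous left-invariant pseudometric
`d`, and these lengths are subadditive. On the translations `v ↦ (v, 1)` the length is a
continuous subadditive function on `𝓗`, hence bounded on norm balls (a vector of norm at most
`R` is a sum of `n` vectors of norm less than `δ`, with `n` depending only on `R`). Every element
of `G` with translation part in the ball of radius `R` is such a translation times an element of
the coarsely bounded subgroup `O(𝓗)`, so these sets are coarsely bounded.
-/

theorem bddAbove_image_of_subadditive {E : Type*} [SeminormedAddCommGroup E]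
    [NormedSpace ℝ E] {φ : E → ℝ} (hadd : ∀ x y, φ (x + y) ≤ φ x + φ y) {c : ℝ}
    (hc : ∀ᶠ x in 𝓝 0, φ x ≤ c)
    {s : Set E} (hs : IsBounded s) : BddAbove (φ '' s) := by
  obtain ⟨δ, hδ, hsmall⟩ := Metric.eventually_nhds_iff.1 hc
  obtain ⟨R, hR⟩ := hs.subset_closedBall 0
  have hsucc_nsmul : ∀ (m : ℕ) y, φ ((m + 1) • y) ≤ (m + 1) * φ y := by
    intro m y
    induction m with
    | zero => simp
    | succ m ih =>
      rw [succ_nsmul]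
      push_cast
      linarith [hadd ((m + 1) • y) y]
  set n : ℕ := ⌈R / δ⌉₊ + 1
  have hn : (0 : ℝ) < n := by positivity
  have hRn : R < n * δ := by
    rw [← div_lt_iff₀ hδ]
    exact (Nat.le_ceil _).trans_lt (by simp [n])
  refine ⟨n * c, ?_⟩
  rintro _ ⟨x, hx, rfl⟩
  have hx_eq : n • ((n : ℝ)⁻¹ • x) = x := by
    rw [← Nat.cast_smul_eq_nsmul ℝ n, smul_smul, mul_inv_cancel₀ hn.ne', one_smul]
  have hpiece : dist ((n : ℝ)⁻¹ • x) 0 < δ := by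
    rw [dist_zero_right, norm_smul, norm_inv, Real.norm_natCast, inv_mul_lt_iff₀ hn]
    exact (mem_closedBall_zero_iff.1 (hR hx)).trans_lt hRn
  calc φ x = φ (n • ((n : ℝ)⁻¹ • x)) := by rw [hx_eq]
    _ ≤ n * φ ((n : ℝ)⁻¹ • x) := by
      simpa [n] using hsucc_nsmul ⌈R / δ⌉₊ ((n : ℝ)⁻¹ • x)
    _ ≤ n * c := mul_le_mul_of_nonneg_left (hsmall hpiece) hn.le

theorem dist_one_mul_le {G : Type*} [Group G] (d : G → G → ℝ)
    (hl : ∀ k g h : G, d (k * g) (k * h) = d g h)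
    (ht : ∀ g h k : G, d g k ≤ d g h + d h k) (a b : G) : d 1 (a * b) ≤ d 1 a + d 1 b :=
  calc d 1 (a * b) ≤ d 1 a + d a (a * b) := ht _ _ _
    _ = d 1 a + d 1 b := by rw [← hl a 1 b, mul_one]

section CoarselyBounded

variable {G : Type*} [Group G] [TopologicalSpace G]

theorem coarselyBounded_iff_dist_one_bounded {B : Set G} :
    CoarselyBounded B ↔ ∀ d : G → G → ℝ,
      Continuous (fun p : G × G => d p.1 p.2) →
      (∀ k g h : G, d (k * g) (k * h) = d g h) →
      (∀ g : G, d g g = 0) →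
      (∀ g h : G, d g h = d h g) →
      (∀ g h k : G, d g k ≤ d g h + d h k) →
      ∃ C : ℝ, ∀ g ∈ B, d 1 g ≤ C := by
  constructor
  · intro hB d hc hl hr hs ht
    obtain ⟨C, hC⟩ := hB d hc hl hr hs ht
    rcases B.eq_empty_or_nonempty with rfl | ⟨b, hb⟩
    · simp
    · exact ⟨d 1 b + C, fun g hg => (ht 1 b g).trans (by linarith [hC b hb g hg])⟩
  · intro hB d hc hl hr hs ht
    obtain ⟨C, hC⟩ := hB d hc hl hr hs ht
    refine ⟨2 * C, fun g hg h hh => ?_⟩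
    calc d g h ≤ d g 1 + d 1 h := ht _ _ _
      _ = d 1 g + d 1 h := by rw [hs g 1]
      _ ≤ 2 * C := by linarith [hC g hg, hC h hh]

theorem CoarselyBounded.mono {A B : Set G} (hB : CoarselyBounded B) (hAB : A ⊆ B) :
    CoarselyBounded A := by
  intro d hc hl hr hs ht
  obtain ⟨C, hC⟩ := hB d hc hl hr hs ht
  exact ⟨C, fun g hg h hh => hC g (hAB hg) h (hAB hh)⟩

theorem CoarselyBounded.mul {A B : Set G} (hA : CoarselyBounded A) (hB : CoarselyBounded B) :
    CoarselyBounded (A * B) := by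
  rw [coarselyBounded_iff_dist_one_bounded] at *
  intro d hc hl hr hs ht
  obtain ⟨C, hC⟩ := hA d hc hl hr hs ht
  obtain ⟨D, hD⟩ := hB d hc hl hr hs ht
  refine ⟨C + D, ?_⟩
  rintro _ ⟨a, ha, b, hb, rfl⟩
  exact (dist_one_mul_le d hl ht a b).trans (add_le_add (hC a ha) (hD b hb))

theorem coarselyBounded_image_of_isBounded {E : Type*} [SeminormedAddCommGroup E]
    [NormedSpace ℝ E] {f : E → G} (hf : Continuous f) (hadd : ∀ x y, f (x + y) = f x * f y)
    {s : Set E} (hs : IsBounded s) : CoarselyBounded (f '' s) := by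
  rw [coarselyBounded_iff_dist_one_bounded]
  intro d hc hl hr _ ht
  have hf0 : f 0 = 1 := by simpa using hadd 0 0
  have hφ : Continuous fun x => d 1 (f x) := hc.comp (continuous_const.prodMk hf)
  have hsmall : ∀ᶠ x in 𝓝 (0 : E), d 1 (f x) ≤ 1 :=
    (hφ.tendsto 0).eventually (ge_mem_nhds (by simp [hf0, hr]))
  have hsub : ∀ x y, d 1 (f (x + y)) ≤ d 1 (f x) + d 1 (f y) := fun x y => by
    rw [hadd]
    exact dist_one_mul_le d hl ht _ _
  obtain ⟨C, hC⟩ := bddAbove_image_of_subadditive hsub hsmall hs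
  exact ⟨C, by rintro _ ⟨x, hx, rfl⟩; exact hC ⟨x, hx, rfl⟩⟩

end CoarselyBounded

@[simp]
theorem IsomGrp.mul_fst (a b : IsomGrp 𝓗) : (a * b).1 = a.1 + a.2 b.1 := rfl

@[simp]
theorem IsomGrp.mul_snd (a b : IsomGrp 𝓗) : (a * b).2 = a.2 * b.2 := rfl

theorem isomGrp_coarselyBounded_norm_fst_le (hO : CoarselyBounded {g : IsomGrp 𝓗 | g.1 = 0})
    (R : ℝ) : CoarselyBounded {g : IsomGrp 𝓗 | ‖g.1‖ ≤ R} := by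
  let translation : 𝓗 → IsomGrp 𝓗 := fun v => (v, 1)
  have htranslations : CoarselyBounded (translation '' closedBall 0 R) :=
    coarselyBounded_image_of_isBounded (continuous_id.prodMk continuous_const)
      (fun x y => Prod.ext (by simp) (by simp)) isBounded_closedBall
  refine (htranslations.mul hO).mono fun g hg => ?_
  refine ⟨translation g.1, ⟨g.1, mem_closedBall_zero_iff.2 hg, rfl⟩, (0, g.2), rfl, ?_⟩
  exact Prod.ext (by simp [translation]) (by simp [translation])

theorem isomGrp_action_coarsely_proper
    (hO : CoarselyBounded {g : IsomGrp 𝓗 | g.1 = 0})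
    (g : ℕ → IsomGrp 𝓗)
    (hg : ∀ B : Set (IsomGrp 𝓗), CoarselyBounded B → ∀ᶠ n in atTop, g n ∉ B) :
    Tendsto (fun n => ‖(g n).1‖) atTop atTop := by
  rw [Filter.tendsto_atTop]
  intro R
  filter_upwards [hg _ (isomGrp_coarselyBounded_norm_fst_le 𝓗 hO R)] with n hn
  exact (lt_of_not_ge hn).le
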